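/- Martin-Löf's complexity-dip theorem: For every A ∈ 2^ω there are infinitely many n with C(A↾n) ≤ n − ⌊log₂ n⌋. In particular, no A ∈ 2^ω satisfies: there is a c ∈ ℕ with C(A↾n) ≥ n − c for all n. -/

import Mathlib

open scoped ENNReal NNReal Classical

namespace AR

/-- Elements of Cantor space `2^ω`: infinite binary sequences. -/
abbrev Seq := ℕ → Bool

/-- Finite binary strings `2^{<ω}`. -/
abbrev Str := List Bool

/-- The first `n` bits of a sequence `A`, as a finite string (`A↾n`). -/
def pre (A : Seq) (n : ℕ) : Str := List.ofFn fun i : Fin n => A i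

/-- The basic clopen cylinder `[σ]` of all sequences extending `σ`. -/
def cyl (σ : Str) : Set Seq := {A | pre A σ.length = σ}

/-- A measure on Cantor space is *fair-coin* if every cylinder `[σ]` has measure
`2^{-|σ|}`; this uniquely characterizes the usual product measure `μ` on `2^ω`. -/
def FairCoin (μ : MeasureTheory.Measure Seq) : Prop :=
  ∀ σ : Str, μ (cyl σ) = (2 : ℝ≥0∞)⁻¹ ^ σ.length

/-- A machine is a partial computable function `2^{<ω} ⇀ 2^{<ω}`. -/
def IsMachine (M : Str →. Str) : Prop := Partrec M

/-- Kolmogorov complexity of `τ` relative to the machine `M`: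
`C_M(τ) = min{|σ| : M(σ)↓ = τ}`, with value `∞` if no such `σ` exists. -/
noncomputable def Cplx (M : Str →. Str) (τ : Str) : ℕ∞ :=
  sInf ((fun σ : Str => (σ.length : ℕ∞)) '' {σ | τ ∈ M σ})

/-- A universal machine: a machine simulating every machine up to an additive
constant.  `Cplx U` for universal `U` is plain Kolmogorov complexity `C`. -/
def UniversalMachine (U : Str →. Str) : Prop :=
  IsMachine U ∧ ∀ M : Str →. Str, IsMachine M → ∃ c : ℕ, ∀ τ, Cplx U τ ≤ Cplx M τ + c

/-- A set of strings is prefix-free if none of its elements is a proper initial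
segment of another. -/
def PrefixFree (S : Set Str) : Prop :=
  ∀ σ ∈ S, ∀ τ ∈ S, σ <+: τ → σ = τ

/-- A prefix-free machine: a machine whose domain is prefix-free. -/
def PrefixFreeMachine (M : Str →. Str) : Prop :=
  IsMachine M ∧ PrefixFree {σ | (M σ).Dom}

/-- A universal prefix-free machine.  `Cplx U` for such `U` is prefix-free
Kolmogorov complexity `K`. -/
def UniversalPFMachine (U : Str →. Str) : Prop :=
  PrefixFreeMachine U ∧
    ∀ M : Str →. Str, PrefixFreeMachine M → ∃ c : ℕ, ∀ τ, Cplx U τ ≤ Cplx M τ + c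

/-- A c.e. (recursively enumerable) predicate. -/
def CEPred {α} [Primcodable α] (p : α → Prop) : Prop :=
  Partrec fun a => Part.assert (p a) fun _ => Part.some ()

/-- A Martin-Löf test: a sequence of uniformly Σ⁰₁ classes `U i`, given by a single
c.e. set `W` of pairs, with `μ (U i) ≤ 2^{-i}`. -/
def MLTest (μ : MeasureTheory.Measure Seq) (U : ℕ → Set Seq) : Prop :=
  ∃ W : Set (ℕ × Str), CEPred (· ∈ W) ∧
    (∀ i, U i = ⋃ σ ∈ {σ : Str | (i, σ) ∈ W}, cyl σ) ∧
    ∀ i, μ (U i) ≤ (2 : ℝ≥0∞)⁻¹ ^ i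

/-- `A` is Martin-Löf random if it passes every Martin-Löf test. -/
def MLRandom (μ : MeasureTheory.Measure Seq) (A : Seq) : Prop :=
  ∀ U : ℕ → Set Seq, MLTest μ U → A ∉ ⋂ i, U i

/-!
Martin-Löf's argument: the length of a description carries information for free. Read the
first `a` bits `ρ₁` of `A` as the number `j ∈ [2^a, 2^(a+1))` with binary digits `1ρ₁`, the next
`j` bits `ρ₂` likewise as `m ∈ [2^j, 2^(j+1))`, and let `σ` be the following `m + j - a` bits.
The length `|σ|` alone determines `(a, j)`, hence `ρ₁` and `ρ₂`, so one fixed machine maps `σ`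
to `A↾n` with `n = m + 2j`. As `log₂ n ≤ j + 1`, this saves `a + j ≥ log₂ n + (a - 1)` bits,
and taking `a` large absorbs the constant of the universal machine.
-/

@[simp] lemma length_pre (A : Seq) (n : ℕ) : (pre A n).length = n := by simp [pre]

lemma pre_add (A : Seq) (s t : ℕ) : pre A (s + t) = pre A s ++ pre (fun i => A (s + i)) t := by
  simp only [pre, List.ofFn_add]
  rfl

lemma cplx_le_length {M : Str →. Str} {σ τ : Str} (h : τ ∈ M σ) : Cplx M τ ≤ σ.length :=
  sInf_le ⟨σ, h, rfl⟩

/-- The number whose binary expansion, least significant bit first, is `ρ` followed by a `1`. -/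
def code (ρ : Str) : ℕ := ρ.foldr Nat.bit 1

def decode (k j : ℕ) : Str := (List.range k).map j.testBit

def InDyadic (a j : ℕ) : Prop := 2 ^ a ≤ j ∧ j < 2 ^ (a + 1)

instance (a j : ℕ) : Decidable (InDyadic a j) := inferInstanceAs (Decidable (_ ∧ _))

lemma inDyadic_length_code (ρ : Str) : InDyadic ρ.length (code ρ) := by
  induction ρ with
  | nil => simp [InDyadic, code]
  | cons b ρ ih =>
    obtain ⟨hlo, hhi⟩ := ih
    simp only [code, List.foldr_cons, Nat.bit_val] at *
    constructor <;> cases b <;> simp [pow_succ] <;> omega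

lemma decode_length_code (ρ : Str) : decode ρ.length (code ρ) = ρ := by
  induction ρ with
  | nil => rfl
  | cons b ρ ih =>
    simp only [decode, code, List.length_cons, List.range_succ_eq_map, List.map_cons,
      List.map_map, List.foldr_cons, Nat.testBit_bit_zero, List.cons.injEq, true_and] at *
    conv_rhs => rw [← ih]
    congr 1
    funext i
    exact Nat.testBit_bit_succ i b _

lemma InDyadic.log_eq {a j : ℕ} (h : InDyadic a j) : Nat.log 2 j = a :=
  Nat.log_eq_of_pow_le_of_lt_pow h.1 h.2

lemma log_two_add_le {j : ℕ} (hj : j ≠ 0) (d : ℕ) : Nat.log 2 (j + d) ≤ Nat.log 2 j + d := by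
  induction d with
  | zero => simp
  | succ d ih =>
    calc Nat.log 2 (j + (d + 1)) ≤ Nat.log 2 ((j + d) * 2) := Nat.log_mono_right (by omega)
      _ = Nat.log 2 (j + d) + 1 := Nat.log_mul_base (by norm_num) (by omega)
      _ ≤ Nat.log 2 j + (d + 1) := by omega

def IsDipPair (l : ℕ) (p : ℕ × ℕ) : Prop := InDyadic p.1 p.2 ∧ InDyadic p.2 (l + p.1 - p.2)

instance (l : ℕ) (p : ℕ × ℕ) : Decidable (IsDipPair l p) := inferInstanceAs (Decidable (_ ∧ _))

/-- Distinct pairs `(a, j)` are dip pairs for disjoint ranges of lengths `l`, namely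
`2 ^ j + j - a ≤ l < 2 ^ (j + 1) + j - a`, because `a = log₂ j` grows slower than `j`. -/
lemma IsDipPair.eq {l : ℕ} {p q : ℕ × ℕ} (hp : IsDipPair l p) (hq : IsDipPair l q) : p = q := by
  suffices ∀ {r s : ℕ × ℕ}, IsDipPair l r → IsDipPair l s → r.2 ≤ s.2 → r.2 = s.2 by
    have h2 : p.2 = q.2 := (le_total p.2 q.2).elim (this hp hq) fun h => (this hq hp h).symm
    have h1 : p.1 = q.1 := by rw [← hp.1.log_eq, ← hq.1.log_eq, h2]
    exact Prod.ext h1 h2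
  rintro ⟨a, j⟩ ⟨a', j'⟩ ⟨hj, hl⟩ ⟨hj', hl'⟩ (hle : j ≤ j')
  dsimp only at *
  obtain ⟨d, rfl⟩ := Nat.exists_eq_add_of_le hle
  by_contra hne
  have hlog : a' ≤ a + d := by
    rw [← hj.log_eq, ← hj'.log_eq]
    exact log_two_add_le (Nat.one_le_iff_ne_zero.1 (Nat.one_le_two_pow.trans hj.1)) d
  have hpow : 2 ^ (j + 1) ≤ 2 ^ (j + d) := Nat.pow_le_pow_right (by norm_num) (by omega)
  have := hl.2; have := hl'.1
  omega

lemma mem_rfind_of_unique {p : ℕ → Bool} {m : ℕ} (hm : p m) (huniq : ∀ k, p k → k = m) :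
    m ∈ Nat.rfind p := by
  refine Nat.mem_rfind.2 ⟨by simpa using hm, fun {k} hk => ?_⟩
  have : p k ≠ true := fun h => (huniq k h ▸ hk).false
  simpa using this

def dipOutput (σ : Str) (p : ℕ × ℕ) : Str :=
  decode p.1 p.2 ++ decode p.2 (σ.length + p.1 - p.2) ++ σ

def dipMachine (σ : Str) : Part Str :=
  (Nat.rfind fun k => Part.some (decide (IsDipPair σ.length k.unpair))).map
    fun k => dipOutput σ k.unpair

lemma append_mem_dipMachine {ρ₁ ρ₂ σ : Str} (h₂ : ρ₂.length = code ρ₁)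
    (hσ : σ.length + ρ₁.length = code ρ₂ + ρ₂.length) : ρ₁ ++ ρ₂ ++ σ ∈ dipMachine σ := by
  have hsub : σ.length + ρ₁.length - ρ₂.length = code ρ₂ := by omega
  have hpair : IsDipPair σ.length (ρ₁.length, code ρ₁) := by
    refine ⟨inDyadic_length_code ρ₁, ?_⟩
    simpa only [← h₂, hsub] using inDyadic_length_code ρ₂
  have hmem : Nat.pair ρ₁.length (code ρ₁) ∈
      Nat.rfind fun k => Part.some (decide (IsDipPair σ.length k.unpair)) :=
    mem_rfind_of_unique (by simpa using hpair) fun k hk => by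
      rw [← Nat.pair_unpair k, (of_decide_eq_true hk).eq hpair]
  refine Part.mem_map_iff _ |>.2 ⟨_, hmem, ?_⟩
  simp only [dipOutput, Nat.unpair_pair, decode_length_code]
  rw [← h₂, hsub, decode_length_code]

section Computability

open Primrec

lemma primrec₂_pow : Primrec₂ ((· ^ ·) : ℕ → ℕ → ℕ) :=
  Primrec₂.unpaired'.1 Nat.Primrec.pow

lemma primrec₂_decode : Primrec₂ decode := by
  have hbit : Primrec₂ fun (p : ℕ × ℕ) (i : ℕ) => p.2.testBit i := by
    simp only [Nat.testBit_eq_decide_div_mod_eq]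
    exact (Primrec.eq.comp (nat_mod.comp (nat_div.comp (snd.comp fst)
      (primrec₂_pow.comp (const 2) snd)) (const 2)) (const 1)).decide
  exact (list_map (list_range.comp fst) hbit).to₂

lemma primrecRel_inDyadic : PrimrecRel InDyadic :=
  (nat_le.comp (primrec₂_pow.comp (const 2) fst) snd).and
    (nat_lt.comp snd (primrec₂_pow.comp (const 2) (succ.comp fst)))

lemma isMachine_dipMachine : IsMachine dipMachine := by
  have hlen : Primrec fun p : Str × ℕ => p.1.length := list_length.comp fst
  have ha : Primrec fun p : Str × ℕ => p.2.unpair.1 := fst.comp (unpair.comp snd)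
  have hj : Primrec fun p : Str × ℕ => p.2.unpair.2 := snd.comp (unpair.comp snd)
  have hcond : PrimrecRel fun (σ : Str) (k : ℕ) => IsDipPair σ.length k.unpair :=
    (primrecRel_inDyadic.comp ha hj).and (primrecRel_inDyadic.comp hj
      (nat_sub.comp (nat_add.comp hlen ha) hj))
  have hout : Primrec₂ fun (σ : Str) (k : ℕ) => dipOutput σ k.unpair :=
    list_append.comp (list_append.comp (primrec₂_decode.comp ha hj)
      (primrec₂_decode.comp hj (nat_sub.comp (nat_add.comp hlen ha) hj))) fst
  exact (Partrec.rfind hcond.decide.to_comp.partrec₂).map hout.to_comp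

end Computability

lemma exists_cplx_dipMachine_le (A : Seq) (a : ℕ) :
    ∃ n l : ℕ, a ≤ n ∧ l + a ≤ n - Nat.log 2 n + 1 ∧ Cplx dipMachine (pre A n) ≤ l := by
  set ρ₁ := pre A a
  set j := code ρ₁
  set ρ₂ := pre (fun i => A (a + i)) j
  set m := code ρ₂
  set σ := pre (fun i => A (a + j + i)) (m + j - a)
  have hpre : pre A (a + j + (m + j - a)) = ρ₁ ++ ρ₂ ++ σ := by rw [pre_add, pre_add]
  have h₁ : ρ₁.length = a := length_pre ..
  have h₂ : ρ₂.length = j := length_pre ..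
  have hσ : σ.length = m + j - a := length_pre ..
  clear_value σ ρ₂ ρ₁
  have hj : InDyadic a j := h₁ ▸ inDyadic_length_code ρ₁
  have hm : InDyadic j m := h₂ ▸ inDyadic_length_code ρ₂
  have haj : a < j := Nat.lt_two_pow_self.trans_le hj.1
  have hmem : ρ₁ ++ ρ₂ ++ σ ∈ dipMachine σ := append_mem_dipMachine h₂ (by omega)
  have hC := cplx_le_length hmem
  rw [← hpre, hσ] at hC
  have hjj : 2 * j < 2 ^ (j + 1) := by
    rw [pow_succ']
    exact Nat.mul_lt_mul_of_pos_left Nat.lt_two_pow_self two_pos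
  have hlog : Nat.log 2 (a + j + (m + j - a)) < j + 2 :=
    Nat.log_lt_of_lt_pow (by omega) (by rw [pow_succ]; have := hm.2; omega)
  exact ⟨_, _, by omega, by omega, hC⟩

lemma not_exists_forall_le_add_of_forall_exists_le_sub_log {f : ℕ → ℕ∞}
    (h : ∀ m : ℕ, ∃ n : ℕ, m ≤ n ∧ f n ≤ ((n - Nat.log 2 n : ℕ) : ℕ∞)) :
    ¬ ∃ c : ℕ, ∀ n : ℕ, (n : ℕ∞) ≤ f n + c := by
  rintro ⟨c, hc⟩
  obtain ⟨n, hn, hfn⟩ := h (2 ^ (c + 1))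
  have hlog : c + 1 ≤ Nat.log 2 n := Nat.le_log_of_pow_le (by norm_num) hn
  have hle : (n : ℕ∞) ≤ ((n - Nat.log 2 n : ℕ) : ℕ∞) + c := (hc n).trans (by gcongr)
  norm_cast at hle
  have := Nat.log_le_self 2 n
  omega

/-- **Martin-Löf's complexity-dip theorem**: for a universal machine `U` and any
`A ∈ 2^ω` there are infinitely many `n` with `C(A↾n) ≤ n - ⌊log₂ n⌋`; in
particular no `A` satisfies `C(A↾n) ≥ n - c` (i.e. `n ≤ C(A↾n) + c`) for all `n`. -/
theorem complexity_dip (U : Str →. Str) (hU : UniversalMachine U) (A : Seq) :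
    (∀ m : ℕ, ∃ n : ℕ, m ≤ n ∧ Cplx U (pre A n) ≤ ((n - Nat.log 2 n : ℕ) : ℕ∞)) ∧
      ¬ ∃ c : ℕ, ∀ n : ℕ, (n : ℕ∞) ≤ Cplx U (pre A n) + c := by
  have dips : ∀ m : ℕ, ∃ n : ℕ, m ≤ n ∧ Cplx U (pre A n) ≤ ((n - Nat.log 2 n : ℕ) : ℕ∞) := by
    intro m
    obtain ⟨c, hc⟩ := hU.2 dipMachine isMachine_dipMachine
    obtain ⟨n, l, hn, hl, hC⟩ := exists_cplx_dipMachine_le A (max m (c + 1))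
    refine ⟨n, le_of_max_le_left hn, ?_⟩
    calc Cplx U (pre A n) ≤ Cplx dipMachine (pre A n) + c := hc _
      _ ≤ ((l + c : ℕ) : ℕ∞) := by push_cast; gcongr
      _ ≤ ((n - Nat.log 2 n : ℕ) : ℕ∞) := by gcongr; omega
  exact ⟨dips, not_exists_forall_le_add_of_forall_exists_le_sub_log dips⟩

end AR
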